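/- For 0 < α < 1/2 (so that 2α < 1), the function g(θ, r) on [−π, π] × [0, 1] defined by g(θ,r) = r^α for −π ≤ θ ≤ −r^{1/2}, g(θ,r) = θ^{2α} for −r^{1/2} ≤ θ ≤ 0, g(θ,r) = θ^α for 0 ≤ θ ≤ r, and g(θ,r) = r^α for r ≤ θ ≤ π, is well-defined (the pieces agree at the interface points) and is α-Hölder continuous on [−π, π] × [0, 1] with respect to the Euclidean metric. -/
import Mathlib

open Real

/-- Subadditivity of `rpow` for reals. -/
lemma rpow_subadd {a b p : ℝ} (ha : 0 ≤ a) (hb : 0 ≤ b) (hp0 : 0 ≤ p) (hp1 : p ≤ 1) :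
    (a + b) ^ p ≤ a ^ p + b ^ p := by
  have h := NNReal.rpow_add_le_add_rpow a.toNNReal b.toNNReal hp0 hp1
  have := congrArg (fun x : NNReal => (x : ℝ)) (rfl : a.toNNReal + b.toNNReal = a.toNNReal + b.toNNReal)
  have key : ((a.toNNReal + b.toNNReal : NNReal) : ℝ) = a + b := by
    simp [Real.toNNReal_of_nonneg ha, Real.toNNReal_of_nonneg hb]
  calc (a + b) ^ p = (((a.toNNReal + b.toNNReal : NNReal) : ℝ)) ^ p := by rw [key]
    _ = (((a.toNNReal + b.toNNReal) ^ p : NNReal) : ℝ) := by rw [← NNReal.coe_rpow]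
    _ ≤ ((a.toNNReal ^ p + b.toNNReal ^ p : NNReal) : ℝ) := by exact_mod_cast h
    _ = a ^ p + b ^ p := by
        push_cast
        rw [Real.coe_toNNReal a ha, Real.coe_toNNReal b hb]

/-- Hölder property of `rpow`. -/
lemma rpow_holder {a b p : ℝ} (ha : 0 ≤ a) (hb : 0 ≤ b) (hp0 : 0 ≤ p) (hp1 : p ≤ 1) :
    |a ^ p - b ^ p| ≤ |a - b| ^ p := by
  wlog hab : b ≤ a generalizing a b
  · rw [abs_sub_comm, abs_sub_comm a b]; exact this hb ha (le_of_not_ge hab)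
  have h1 : a ^ p ≤ (a - b) ^ p + b ^ p := by
    calc a ^ p = ((a - b) + b) ^ p := by ring_nf
      _ ≤ (a - b) ^ p + b ^ p := rpow_subadd (by linarith) hb hp0 hp1
  have h2 : b ^ p ≤ a ^ p := Real.rpow_le_rpow hb hab hp0
  rw [abs_of_nonneg (by linarith), abs_of_nonneg (by linarith)]
  linarith

/-- Tumanov's boundary datum: for `0 < α < 1/2`, the piecewise function
`g(θ,r)` on `[-π,π] × [0,1]` given by `r^α` for `θ ≤ -r^{1/2}`, `|θ|^{2α}` for
`-r^{1/2} ≤ θ ≤ 0`, `θ^α` for `0 ≤ θ ≤ r`, and `r^α` for `r ≤ θ`, has matching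
pieces at the interface points and is `α`-Hölder continuous on `[-π,π] × [0,1]`. -/
theorem tumanov_datum_holder (α : ℝ) (hα0 : 0 < α) (hα1 : α < 1 / 2) :
    -- the pieces agree at the interface points
    (∀ r ∈ Set.Icc (0 : ℝ) 1,
      |(-(r ^ (1 / 2 : ℝ)))| ^ (2 * α) = r ^ α ∧ |(0 : ℝ)| ^ (2 * α) = (0 : ℝ) ^ α) ∧
    -- and the piecewise function is α-Hölder on [-π, π] × [0, 1]
    (∃ C : ℝ, ∀ p ∈ Set.Icc (-Real.pi) Real.pi ×ˢ Set.Icc (0 : ℝ) 1,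
      ∀ q ∈ Set.Icc (-Real.pi) Real.pi ×ˢ Set.Icc (0 : ℝ) 1,
      |(fun x : ℝ × ℝ =>
          if x.1 ≤ -(x.2 ^ (1 / 2 : ℝ)) then x.2 ^ α
          else if x.1 ≤ 0 then |x.1| ^ (2 * α)
          else if x.1 ≤ x.2 then x.1 ^ α
          else x.2 ^ α) p -
        (fun x : ℝ × ℝ =>
          if x.1 ≤ -(x.2 ^ (1 / 2 : ℝ)) then x.2 ^ α
          else if x.1 ≤ 0 then |x.1| ^ (2 * α)
          else if x.1 ≤ x.2 then x.1 ^ α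
          else x.2 ^ α) q| ≤ C * dist p q ^ α) := by
  constructor
  · intro r hr
    constructor
    · rw [abs_neg, abs_of_nonneg (Real.rpow_nonneg hr.1 _), ← Real.rpow_mul hr.1,
        show (1 / 2 : ℝ) * (2 * α) = α by ring]
    · rw [abs_zero, Real.zero_rpow (by linarith), Real.zero_rpow (by linarith)]
  · -- the function equals (min r (h θ))^α on the domain, where h θ = θ² for θ ≤ 0, θ for θ > 0
    set h : ℝ → ℝ := fun θ => if θ ≤ 0 then θ ^ 2 else θ with hh
    have hα1' : α ≤ 1 := by linarith
    have key : ∀ x : ℝ × ℝ, x ∈ Set.Icc (-Real.pi) Real.pi ×ˢ Set.Icc (0 : ℝ) 1 →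
        (if x.1 ≤ -(x.2 ^ (1 / 2 : ℝ)) then x.2 ^ α
          else if x.1 ≤ 0 then |x.1| ^ (2 * α)
          else if x.1 ≤ x.2 then x.1 ^ α
          else x.2 ^ α) = (min x.2 (h x.1)) ^ α := by
      rintro ⟨θ, r⟩ ⟨hθ, hr0, hr1⟩
      have hsq : (r ^ (1 / 2 : ℝ)) ^ 2 = r := by
        rw [← Real.rpow_natCast, ← Real.rpow_mul hr0]; norm_num
      have hsqnn : 0 ≤ r ^ (1 / 2 : ℝ) := Real.rpow_nonneg hr0 _
      dsimp only
      split_ifs with h1 h2 h3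
      · -- θ ≤ -√r : min r θ² = r
        have hθ0 : θ ≤ 0 := le_trans h1 (by linarith)
        have : r ≤ θ ^ 2 := by nlinarith [hsq, hsqnn]
        rw [hh]; simp only [hθ0, if_pos]
        rw [min_eq_left this]
      · -- -√r < θ ≤ 0 : min r θ² = θ²
        have : θ ^ 2 ≤ r := by nlinarith [hsq, hsqnn]
        rw [hh]; simp only [h2, if_pos]
        rw [min_eq_right this, Real.rpow_mul (abs_nonneg θ),
          show ((2:ℝ)) = ((2:ℕ):ℝ) from by norm_num, Real.rpow_natCast, sq_abs]
      · -- 0 < θ ≤ r : min r θ = θ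
        rw [hh]; simp only [h2, if_neg, if_false]
        rw [min_eq_right h3]
      · -- θ > r : min r θ = r
        rw [hh]; simp only [h2, if_neg, if_false]
        rw [min_eq_left (by linarith)]
    -- Lipschitz bound on h
    have hpi1 : (1 : ℝ) ≤ Real.pi := by linarith [Real.pi_gt_three]
    have hlip : ∀ a ∈ Set.Icc (-Real.pi) Real.pi, ∀ b ∈ Set.Icc (-Real.pi) Real.pi,
        |h a - h b| ≤ 2 * Real.pi * |a - b| := by
      intro a ha b hb
      obtain ⟨ha1, ha2⟩ := ha
      obtain ⟨hb1, hb2⟩ := hb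
      rw [hh]
      dsimp only
      split_ifs with h1 h2 h2
      · have e : a ^ 2 - b ^ 2 = (a + b) * (a - b) := by ring
        rw [e, abs_mul]
        have h3 : |a + b| ≤ 2 * Real.pi := by rw [abs_le]; constructor <;> linarith
        exact mul_le_mul_of_nonneg_right h3 (abs_nonneg _)
      · have hab : |a - b| = b - a := by rw [abs_of_nonpos (by linarith)]; ring
        rw [abs_le, hab]
        constructor <;> nlinarith
      · have hab : |a - b| = a - b := by rw [abs_of_nonneg (by linarith)]
        rw [abs_le, hab]
        constructor <;> nlinarith
      · nlinarith [abs_nonneg (a - b)]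
    refine ⟨(2 * Real.pi) ^ α, ?_⟩
    intro p hp q hq
    dsimp only
    rw [key p hp, key q hq]
    have hm : ∀ x : ℝ × ℝ, x ∈ Set.Icc (-Real.pi) Real.pi ×ˢ Set.Icc (0 : ℝ) 1 →
        0 ≤ min x.2 (h x.1) := by
      rintro ⟨θ, r⟩ ⟨hθ, hr0, hr1⟩
      refine le_min hr0 ?_
      rw [hh]; dsimp only; split_ifs with h1
      · positivity
      · linarith
    have step1 : |min p.2 (h p.1) ^ α - min q.2 (h q.1) ^ α| ≤
        |min p.2 (h p.1) - min q.2 (h q.1)| ^ α :=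
      rpow_holder (hm p hp) (hm q hq) hα0.le hα1'
    have step2 : |min p.2 (h p.1) - min q.2 (h q.1)| ≤ 2 * Real.pi * dist p q := by
      refine le_trans (abs_min_sub_min_le_max _ _ _ _) ?_
      have d1 : |p.1 - q.1| ≤ dist p q := by
        rw [Prod.dist_eq, Real.dist_eq]; exact le_max_left _ _ |>.trans' le_rfl
      have d2 : |p.2 - q.2| ≤ dist p q := by
        rw [Prod.dist_eq, Real.dist_eq]; exact le_max_right _ _
      refine max_le ?_ ?_
      · calc |p.2 - q.2| ≤ dist p q := d2
          _ ≤ 2 * Real.pi * dist p q := by nlinarith [dist_nonneg (x := p) (y := q)]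
      · calc |h p.1 - h q.1| ≤ 2 * Real.pi * |p.1 - q.1| := hlip p.1 hp.1 q.1 hq.1
          _ ≤ 2 * Real.pi * dist p q := by nlinarith [d1, abs_nonneg (p.1 - q.1)]
    calc |min p.2 (h p.1) ^ α - min q.2 (h q.1) ^ α|
        ≤ |min p.2 (h p.1) - min q.2 (h q.1)| ^ α := step1
      _ ≤ (2 * Real.pi * dist p q) ^ α :=
          Real.rpow_le_rpow (abs_nonneg _) step2 hα0.le
      _ = (2 * Real.pi) ^ α * dist p q ^ α :=
          Real.mul_rpow (by positivity) dist_nonneg
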